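/- Let a > 0 and let (c₁, c₂) ∈ ℝ² with (c₁, c₂) ≠ (0, 0). Then (1/2)(e^{2a} − 1 − 2a)·c₁² + 2a²·c₁c₂ + (1/2)(e^{−2a} − 1 + 2a)·c₂² > 0. -/

import Mathlib

/-!
Write `x = 2a`, `A = eˣ - 1 - x` and `B = e⁻ˣ - 1 + x`. The form is `½A c₁² + 2a² c₁c₂ + ½B c₂²`,
so it is positive definite once `A > 0` and `a⁴ < AB/4`, i.e. `x⁴/4 < AB`. Expanding,
`AB = 2 - x² - 2 cosh x + 2x sinh x`, and `x⁴/4 < AB` follows by monotonicity: the difference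
vanishes at `0` and has derivative `2x (cosh x - 1 - x²/2) > 0`.
-/

open Real Set

lemma strictMonoOn_Ici_of_hasDerivAt_pos {f f' : ℝ → ℝ} {a : ℝ}
    (hf : ∀ x, HasDerivAt f (f' x) x) (hf' : ∀ x, a < x → 0 < f' x) :
    StrictMonoOn f (Ici a) :=
  strictMonoOn_of_hasDerivWithinAt_pos (convex_Ici a)
    (fun x _ ↦ (hf x).continuousAt.continuousWithinAt)
    (fun x _ ↦ (hf x).hasDerivWithinAt)
    (fun x hx ↦ hf' x (by rwa [interior_Ici] at hx))

lemma Real.one_add_sq_div_two_lt_cosh {x : ℝ} (hx : 0 < x) : 1 + x ^ 2 / 2 < cosh x := by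
  have hderiv (t : ℝ) : HasDerivAt (fun t ↦ cosh t - t ^ 2 / 2) (sinh t - t) t :=
    ((hasDerivAt_cosh t).sub ((hasDerivAt_pow 2 t).div_const 2)).congr_deriv (by norm_num)
  have := strictMonoOn_Ici_of_hasDerivAt_pos hderiv (fun t ht ↦ sub_pos.2 (self_lt_sinh_iff.2 ht))
    self_mem_Ici hx.le hx
  simp only [cosh_zero] at this
  linarith

lemma Real.exp_sub_one_sub_mul_exp_neg_sub_one_add (x : ℝ) :
    (exp x - 1 - x) * (exp (-x) - 1 + x) = 2 - x ^ 2 - 2 * cosh x + 2 * x * sinh x := by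
  have hinv : exp x * exp (-x) = 1 := by rw [← exp_add, add_neg_cancel, exp_zero]
  rw [cosh_eq, sinh_eq]
  linear_combination hinv

lemma Real.pow_four_div_four_lt_two_sub_sq_sub_two_mul_cosh_add {x : ℝ} (hx : 0 < x) :
    x ^ 4 / 4 < 2 - x ^ 2 - 2 * cosh x + 2 * x * sinh x := by
  have hderiv (t : ℝ) : HasDerivAt (fun t ↦ 2 - t ^ 2 - 2 * cosh t + 2 * t * sinh t - t ^ 4 / 4)
      (2 * t * (cosh t - 1 - t ^ 2 / 2)) t := by
    refine (((((hasDerivAt_const t (2 : ℝ)).sub (hasDerivAt_pow 2 t)).sub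
      ((hasDerivAt_cosh t).const_mul 2)).add (((hasDerivAt_id t).const_mul 2).mul
      (hasDerivAt_sinh t))).sub ((hasDerivAt_pow 4 t).div_const 4)).congr_deriv ?_
    norm_num
    ring
  have := strictMonoOn_Ici_of_hasDerivAt_pos hderiv
    (fun t ht ↦ mul_pos (by positivity) (by linarith [one_add_sq_div_two_lt_cosh ht]))
    self_mem_Ici hx.le hx
  simp only [cosh_zero, sinh_zero] at this
  linarith

lemma quadratic_form_pos_of_sq_lt_mul {p q r u v : ℝ} (hp : 0 < p) (hdisc : q ^ 2 < p * r)
    (huv : (u, v) ≠ (0, 0)) : 0 < p * u ^ 2 + 2 * q * u * v + r * v ^ 2 := by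
  have hsq : p * (p * u ^ 2 + 2 * q * u * v + r * v ^ 2) =
      (p * u + q * v) ^ 2 + (p * r - q ^ 2) * v ^ 2 := by
    ring
  refine pos_of_mul_pos_right ?_ hp.le
  rw [hsq]
  rcases eq_or_ne v 0 with rfl | hv
  · have hu : u ≠ 0 := fun hu ↦ huv (by rw [hu])
    simp only [mul_zero, add_zero, zero_pow two_ne_zero]
    exact sq_pos_of_ne_zero (mul_ne_zero hp.ne' hu)
  · exact add_pos_of_nonneg_of_pos (sq_nonneg _) (mul_pos (sub_pos.2 hdisc) (sq_pos_of_ne_zero hv))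

/-- Positive definiteness of the second-variation quadratic form
`½(e^{2a}-1-2a)c₁² + 2a²c₁c₂ + ½(e^{-2a}-1+2a)c₂²` for `a > 0`. -/
theorem stmt10 (a : ℝ) (ha : 0 < a) (c₁ c₂ : ℝ) (hc : (c₁, c₂) ≠ (0, 0)) :
    0 < (1 / 2) * (Real.exp (2 * a) - 1 - 2 * a) * c₁ ^ 2 + 2 * a ^ 2 * c₁ * c₂
      + (1 / 2) * (Real.exp (-(2 * a)) - 1 + 2 * a) * c₂ ^ 2 := by
  have hx : 0 < 2 * a := by positivity
  have hA : 0 < exp (2 * a) - 1 - 2 * a := by linarith [add_one_lt_exp hx.ne']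
  have hdet : (2 * a) ^ 4 / 4 < (exp (2 * a) - 1 - 2 * a) * (exp (-(2 * a)) - 1 + 2 * a) := by
    rw [exp_sub_one_sub_mul_exp_neg_sub_one_add]
    exact pow_four_div_four_lt_two_sub_sq_sub_two_mul_cosh_add hx
  refine quadratic_form_pos_of_sq_lt_mul (by positivity) ?_ hc
  linarith
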